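/- For a directed graph G with unit-capacity edges, source r, and λ* = min over nonempty cuts C ⊊ V with r ∈ C of |{(a,b) ∈ E : a ∈ C, b ∉ C}|, the broadcast capacity of the mini-slot model measured per slot (one slot = m mini-slots) is at most λ*: for any policy π, min_{i ∈ V} lim inf_T R_i^π(T)/T ≤ λ* (with T counted in slots), almost surely. -/

import Mathlib

/-!
Fix a cut `C ∋ r` of size `λ*` and a node `i ∉ C`. A packet newly held outside `C` must have
crossed the active edge from its tail inside `C`, and at most one packet crosses per mini-slot;
so node `i` holds at most as many packets as there were activations of edges leaving `C`.
These activations are i.i.d. events of probability `λ*/m`, so by the strong law of large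
numbers there are about `λ* T` of them among the `mT` mini-slots of `T` slots.
-/

open MeasureTheory Filter ProbabilityTheory Topology Finset

section CutCounting

variable {V : Type*} {r : V} {S : ℕ → V × V} {H : ℕ → V → Set ℕ} {C : Set V}
  [DecidablePred (· ∈ C)]

theorem encard_biUnion_compl_succ_le (hrC : r ∈ C) (t : ℕ)
    (hstep : ∀ v, v ≠ r → ∃ X : Set ℕ, X.Subsingleton ∧
      (∀ p ∈ X, (S (t + 1)).2 = v ∧ p ∈ H t (S (t + 1)).1) ∧ H (t + 1) v ⊆ H t v ∪ X) :
    (⋃ v ∈ Cᶜ, H (t + 1) v).encard ≤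
      (⋃ v ∈ Cᶜ, H t v).encard + if S (t + 1) ∈ C ×ˢ Cᶜ then 1 else 0 := by
  set U := ⋃ v ∈ Cᶜ, H t v
  set w := (S (t + 1)).2
  have hne_r : ∀ v ∉ C, v ≠ r := fun v hv h => hv (h ▸ hrC)
  have hnew : ∀ p ∈ (⋃ v ∈ Cᶜ, H (t + 1) v) \ U,
      S (t + 1) ∈ C ×ˢ Cᶜ ∧ p ∈ H (t + 1) w \ H t w := by
    rintro p ⟨hp, hpU⟩
    obtain ⟨v, hvC, hpv⟩ := Set.mem_iUnion₂.1 hp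
    have hpv' : p ∉ H t v := fun h => hpU (Set.mem_biUnion hvC h)
    obtain ⟨X, -, hX, hsub⟩ := hstep v (hne_r v hvC)
    obtain ⟨rfl, hsrc⟩ := hX p ((hsub hpv).resolve_left hpv')
    exact ⟨⟨by_contra fun h => hpU (Set.mem_biUnion h hsrc), hvC⟩, hpv, hpv'⟩
  calc _ ≤ ((⋃ v ∈ Cᶜ, H (t + 1) v) \ U).encard + U.encard :=
        Set.encard_le_encard_sdiff_add_encard _ _
    _ ≤ U.encard + if S (t + 1) ∈ C ×ˢ Cᶜ then 1 else 0 := by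
      rw [add_comm]
      gcongr
      split_ifs with hcross
      · obtain ⟨X, hX, -, hsub⟩ := hstep w (hne_r w hcross.2)
        refine Set.encard_le_one_iff_subsingleton.2 (hX.anti fun p hp => ?_)
        obtain ⟨-, hpw, hpw'⟩ := hnew p hp
        exact (hsub hpw).resolve_left hpw'
      · exact (Set.encard_eq_zero.2 (Set.eq_empty_of_forall_notMem
          fun p hp => hcross (hnew p hp).1)).le

theorem encard_biUnion_compl_le_card_filter (hrC : r ∈ C) (h0 : ∀ v, v ≠ r → H 0 v = ∅)
    (hstep : ∀ t v, v ≠ r → ∃ X : Set ℕ, X.Subsingleton ∧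
      (∀ p ∈ X, (S (t + 1)).2 = v ∧ p ∈ H t (S (t + 1)).1) ∧ H (t + 1) v ⊆ H t v ∪ X)
    (t : ℕ) :
    (⋃ v ∈ Cᶜ, H t v).encard ≤ #{s ∈ range (t + 1) | S s ∈ C ×ˢ Cᶜ} := by
  induction t with
  | zero =>
    have : ⋃ v ∈ Cᶜ, H 0 v = ∅ := by
      simpa using fun v (hv : v ∉ C) => h0 v fun h => hv (h ▸ hrC)
    rw [this, Set.encard_empty]
    exact zero_le
  | succ t ih =>
    calc _ ≤ _ := encard_biUnion_compl_succ_le hrC t (hstep t)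
      _ ≤ #{s ∈ range (t + 1) | S s ∈ C ×ˢ Cᶜ} + if S (t + 1) ∈ C ×ˢ Cᶜ then 1 else 0 := by
        gcongr
      _ = #{s ∈ range (t + 1 + 1) | S s ∈ C ×ˢ Cᶜ} := by
        rw [card_filter, card_filter, sum_range_succ _ (t + 1)]
        push_cast
        rfl

end CutCounting

section Frequency

variable {Ω α : Type*} [MeasurableSpace Ω] {P : Measure Ω} [MeasurableSpace α]

theorem ae_tendsto_card_filter_div [IsFiniteMeasure P] {S : ℕ → Ω → α}
    (hS : ∀ t, Measurable (S t)) (hindep : iIndepFun S P)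
    (hident : ∀ t, IdentDistrib (S t) (S 0) P P) {A : Set α} (hA : MeasurableSet A)
    [DecidablePred (· ∈ A)] :
    ∀ᵐ ω ∂P, Tendsto (fun n : ℕ => (#{s ∈ range n | S s ω ∈ A} : ℝ) / n) atTop
      (𝓝 (P.real (S 0 ⁻¹' A))) := by
  have hφ : Measurable (A.indicator (1 : α → ℝ)) := measurable_one.indicator hA
  have hcomp : A.indicator (1 : α → ℝ) ∘ S 0 = (S 0 ⁻¹' A).indicator 1 :=
    funext fun ω => (Set.indicator_comp_right (S 0) (g := 1) (x := ω)).symm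
  have hint : Integrable (A.indicator (1 : α → ℝ) ∘ S 0) P :=
    hcomp ▸ (integrable_const 1).indicator (hS 0 hA)
  have hmean : ∫ ω, (A.indicator (1 : α → ℝ) ∘ S 0) ω ∂P = P.real (S 0 ⁻¹' A) :=
    hcomp ▸ integral_indicator_one (hS 0 hA)
  have := strong_law_ae_real (fun t => A.indicator (1 : α → ℝ) ∘ S t) hint
    (fun s t hst => (hindep.indepFun hst).comp hφ hφ) (fun t => (hident t).comp hφ)
  rw [hmean] at this
  simpa only [Function.comp_apply, Set.indicator_apply, Pi.one_apply, sum_boole]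
    using this

theorem measure_preimage_eq_card_filter_div [MeasurableSingletonClass α] {E : Finset α}
    {X : Ω → α} (hX : Measurable X) (hmem : ∀ ω, X ω ∈ E)
    (hunif : ∀ e ∈ E, P {ω | X ω = e} = 1 / #E) (A : Set α) [DecidablePred (· ∈ A)] :
    P (X ⁻¹' A) = #{e ∈ E | e ∈ A} / #E := by
  have hdecomp : X ⁻¹' A = ⋃ e ∈ {e ∈ E | e ∈ A}, X ⁻¹' {e} := by
    ext ω
    simp [hmem ω]
  rw [hdecomp, measure_biUnion_finset
    (fun a _ b _ hab => (Set.disjoint_singleton.2 hab).preimage X)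
    (fun e _ => hX (measurableSet_singleton e))]
  have hunif' : ∀ e ∈ E, P (X ⁻¹' {e}) = 1 / #E := hunif
  rw [sum_congr rfl fun e he => hunif' e (mem_filter.1 he).1, sum_const, nsmul_eq_mul,
    mul_one_div]

theorem identDistrib_of_forall_measure_eq_one_div_card [MeasurableSingletonClass α]
    {E : Finset α} {X Y : Ω → α} (hX : Measurable X) (hY : Measurable Y)
    (hXmem : ∀ ω, X ω ∈ E) (hYmem : ∀ ω, Y ω ∈ E)
    (hXunif : ∀ e ∈ E, P {ω | X ω = e} = 1 / #E) (hYunif : ∀ e ∈ E, P {ω | Y ω = e} = 1 / #E) :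
    IdentDistrib X Y P P := by
  classical
  refine ⟨hX.aemeasurable, hY.aemeasurable, Measure.ext fun A hA => ?_⟩
  rw [Measure.map_apply hX hA, Measure.map_apply hY hA,
    measure_preimage_eq_card_filter_div hX hXmem hXunif,
    measure_preimage_eq_card_filter_div hY hYmem hYunif]

end Frequency

theorem tendsto_comp_mul_add_one_div {u : ℕ → ℝ} {a : ℝ} {m : ℕ} (hm : 0 < m)
    (hu : Tendsto (fun n : ℕ => u n / n) atTop (𝓝 a)) :
    Tendsto (fun T : ℕ => u (m * T + 1) / T) atTop (𝓝 (a * m)) := by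
  have hlin : Tendsto (fun T : ℕ => m * T + 1) atTop atTop :=
    tendsto_atTop_mono (fun T => (Nat.le_mul_of_pos_left T hm).trans (Nat.le_succ _)) tendsto_id
  have hratio : Tendsto (fun T : ℕ => ((m * T + 1 : ℕ) : ℝ) / T) atTop (𝓝 m) := by
    have := (tendsto_const_nhds (x := (m : ℝ))).add tendsto_one_div_atTop_nhds_zero_nat
    rw [add_zero] at this
    refine this.congr' ((eventually_ne_atTop 0).mono fun T hT => ?_)
    push_cast
    field_simp
  refine ((hu.comp hlin).mul hratio).congr' ((eventually_ne_atTop 0).mono fun T hT => ?_)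
  have : ((m * T + 1 : ℕ) : ℝ) ≠ 0 := by positivity
  simp only [Function.comp_apply]
  field_simp

/-- in the mini-slot model (one slot = `m = |E|` mini-slots),
the broadcast rate of any policy, measured per slot, is bounded a.s. by
`lamstar`, the minimum size of a cut separating the source `r` from some
node.  The policy model is as in Statement 15. -/
theorem broadcast_capacity_upper_bound {Ω : Type*} [MeasurableSpace Ω]
    (P : Measure Ω) [IsProbabilityMeasure P]
    {V : Type*} [Fintype V] [DecidableEq V]
    [MeasurableSpace (V × V)] [MeasurableSingletonClass (V × V)]
    (E : Finset (V × V)) (r : V)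
    (S : ℕ → Ω → V × V) (H : ℕ → Ω → V → Set ℕ)
    (hS_mem : ∀ t ω, S t ω ∈ E)
    (hmeas : ∀ t, Measurable (S t))
    (hindep : iIndepFun S P)
    (hunif : ∀ (t : ℕ), ∀ e ∈ E, P {ω | S t ω = e} = 1 / E.card)
    (h0 : ∀ ω v, v ≠ r → H 0 ω v = ∅)
    (hstep : ∀ t ω v, v ≠ r → ∃ X : Set ℕ, X.Subsingleton ∧
      (∀ p ∈ X, (S (t + 1) ω).2 = v ∧ p ∈ H t ω (S (t + 1) ω).1) ∧
      H (t + 1) ω v ⊆ H t ω v ∪ X)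
    (lamstar : ℕ)
    (hlam : IsLeast {k : ℕ | ∃ C : Finset V, r ∈ C ∧ C ≠ Finset.univ ∧
      k = (E.filter (fun e => e.1 ∈ C ∧ e.2 ∉ C)).card} lamstar) :
    ∀ᵐ ω ∂P, ∃ i : V,
      liminf (fun T : ℕ => ((H (E.card * T) ω i).ncard : ℝ) / T) atTop ≤
        (lamstar : ℝ) := by
  obtain ⟨C, hrC, hCne, rfl⟩ := hlam.1
  obtain ⟨i, hiC⟩ : ∃ i, i ∉ C := by simpa [eq_univ_iff_forall] using hCne
  obtain ⟨ω₀⟩ := nonempty_of_isProbabilityMeasure P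
  have hm : 0 < #E := card_pos.2 ⟨_, hS_mem 0 ω₀⟩
  have hident t := identDistrib_of_forall_measure_eq_one_div_card (hmeas t) (hmeas 0)
    (hS_mem t) (hS_mem 0) (hunif t) (hunif 0)
  have hcut : P.real (S 0 ⁻¹' ((C : Set V) ×ˢ (C : Set V)ᶜ)) =
      #{e ∈ E | e.1 ∈ C ∧ e.2 ∉ C} / #E := by
    rw [measureReal_def, measure_preimage_eq_card_filter_div (hmeas 0) (hS_mem 0) (hunif 0),
      ENNReal.toReal_div, ENNReal.toReal_natCast, ENNReal.toReal_natCast]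
    simp only [Set.mem_prod, Finset.mem_coe, Set.mem_compl_iff]
  filter_upwards [ae_tendsto_card_filter_div hmeas hindep hident
    ((C : Set V) ×ˢ (C : Set V)ᶜ).toFinite.measurableSet] with ω hω
  refine ⟨i, ?_⟩
  rw [hcut] at hω
  have hlim := tendsto_comp_mul_add_one_div hm hω
  rw [div_mul_cancel₀ _ (by positivity)] at hlim
  have hbound T : (H (#E * T) ω i).ncard ≤
      #{s ∈ range (#E * T + 1) | S s ω ∈ (C : Set V) ×ˢ (C : Set V)ᶜ} :=
    ENat.toNat_le_of_le_natCast <| (Set.encard_mono (Set.subset_biUnion_of_mem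
      (u := fun v => H (#E * T) ω v) (show i ∈ (C : Set V)ᶜ from hiC))).trans <|
        encard_biUnion_compl_le_card_filter (S := fun t => S t ω) hrC (h0 ω) (hstep · ω) _
  calc _ ≤ liminf (fun T : ℕ =>
        (#{s ∈ range (#E * T + 1) | S s ω ∈ (C : Set V) ×ˢ (C : Set V)ᶜ} : ℝ) / T) atTop :=
        liminf_le_liminf (.of_forall fun T => by gcongr; exact_mod_cast hbound T)
          (isBoundedUnder_of ⟨0, fun T => by positivity⟩) hlim.isBoundedUnder_le.isCoboundedUnder_ge
    _ = _ := hlim.liminf_eq
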